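/- arXiv:1112.2235 — 4 statements merged into one kernel-verified Lean document; each statement's English description precedes it below -/
import Mathlib

section
/- Let K be a field, C a free abelian group of finite rank, R a C-graded associative unital K-algebra, and p : C × C → Kˣ a normalized 2-cocycle. Let I be a graded subspace of R, i.e. I = ⊕_{γ∈C} (I ∩ R_γ). Then I is a completely prime two-sided ideal of the twist R_p if and only if I is a completely prime two-sided ideal of R. (A completely prime ideal is a proper two-sided ideal I such that ab ∈ I implies a ∈ I or b ∈ I.) -/
/-!
On homogeneous elements the twisted product `mp a b` is a unit multiple of `a * b`, so the two
products impose the same conditions there. It therefore suffices to know that a graded subspace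
`I` is a completely prime ideal for a graded bilinear product `m` as soon as
`m a b ∈ I ↔ a ∈ I ∨ b ∈ I` for homogeneous `a`, `b`. Absorption follows by expanding into
components. For primality, discard the components of `a` and `b` lying in `I`: this changes
`m a b` only by an element of `I`. A free abelian group has unique sums, so some degree
`i₀ + j₀` of the product of what remains is attained by exactly one pair of components, and that
homogeneous component of the product is the single term `m aᵢ₀ bⱼ₀`, with both factors outside `I`.
-/

theorem LinearMap.map_sum_sum {R M N P ι κ : Type*} [CommSemiring R] [AddCommMonoid M]
    [AddCommMonoid N] [AddCommMonoid P] [Module R M] [Module R N] [Module R P]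
    (f : M →ₗ[R] N →ₗ[R] P) (s : Finset ι) (t : Finset κ) (x : ι → M) (y : κ → N) :
    f (∑ i ∈ s, x i) (∑ j ∈ t, y j) = ∑ q ∈ s ×ˢ t, f (x q.1) (y q.2) := by
  simp only [map_sum, LinearMap.sum_apply, Finset.sum_product]
  exact Finset.sum_comm

namespace DirectSum

variable {ι K M : Type*} [DecidableEq ι] [CommRing K] [AddCommGroup M] [Module K M]
  (𝒜 : ι → Submodule K M) [Decomposition 𝒜] {I : Submodule K M}

theorem bilin_apply_eq_sum_decompose [∀ (i) (x : 𝒜 i), Decidable (x ≠ 0)]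
    (m : M →ₗ[K] M →ₗ[K] M) (x y : M) :
    m x y = ∑ q ∈ (decompose 𝒜 x).support ×ˢ (decompose 𝒜 y).support,
      m (decompose 𝒜 x q.1) (decompose 𝒜 y q.2) := by
  conv_lhs => rw [← sum_support_decompose 𝒜 x, ← sum_support_decompose 𝒜 y]
  exact m.map_sum_sum _ _ _ _

theorem exists_finset_sub_sum_decompose_mem (x : M) :
    ∃ A : Finset ι, (∀ i ∈ A, (decompose 𝒜 x i : M) ∉ I) ∧
      x - ∑ i ∈ A, (decompose 𝒜 x i : M) ∈ I := by
  classical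
  refine ⟨(decompose 𝒜 x).support.filter fun i => (decompose 𝒜 x i : M) ∉ I,
    fun i hi => (Finset.mem_filter.mp hi).2, ?_⟩
  have hsplit : x - ∑ i ∈ (decompose 𝒜 x).support with (decompose 𝒜 x i : M) ∉ I,
      (decompose 𝒜 x i : M) =
      ∑ i ∈ (decompose 𝒜 x).support with (decompose 𝒜 x i : M) ∈ I, (decompose 𝒜 x i : M) := by
    rw [sub_eq_iff_eq_add, Finset.sum_filter_add_sum_filter_not, sum_support_decompose]
  rw [hsplit]
  exact I.sum_mem fun i hi => (Finset.mem_filter.mp hi).2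

theorem decompose_bilin_sum_of_uniqueAdd [Add ι] (m : M →ₗ[K] M →ₗ[K] M)
    (hm : ∀ i j a b, a ∈ 𝒜 i → b ∈ 𝒜 j → m a b ∈ 𝒜 (i + j))
    {x y : ι → M} (hx : ∀ i, x i ∈ 𝒜 i) (hy : ∀ j, y j ∈ 𝒜 j)
    {A B : Finset ι} {i₀ j₀ : ι} (hi₀ : i₀ ∈ A) (hj₀ : j₀ ∈ B) (huniq : UniqueAdd A B i₀ j₀) :
    (decompose 𝒜 (m (∑ i ∈ A, x i) (∑ j ∈ B, y j)) (i₀ + j₀) : M) = m (x i₀) (y j₀) := by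
  rw [m.map_sum_sum, decompose_sum, DFinsupp.finsetSum_apply, AddSubmonoidClass.coe_finsetSum,
    Finset.sum_eq_single_of_mem (i₀, j₀) (Finset.mem_product.mpr ⟨hi₀, hj₀⟩)]
  · exact decompose_of_mem_same 𝒜 (hm _ _ _ _ (hx i₀) (hy j₀))
  · rintro ⟨i, j⟩ hij hne
    obtain ⟨hi, hj⟩ := Finset.mem_product.mp hij
    refine decompose_of_mem_ne 𝒜 (hm _ _ _ _ (hx i) (hy j)) fun hsum => hne ?_
    obtain ⟨rfl, rfl⟩ := huniq hi hj hsum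
    rfl

theorem bilin_mem_of_homogeneous (m : M →ₗ[K] M →ₗ[K] M)
    (hI : ∀ x ∈ I, ∀ i, (decompose 𝒜 x i : M) ∈ I)
    (h : ∀ i j a b, a ∈ 𝒜 i → b ∈ 𝒜 j → a ∈ I ∨ b ∈ I → m a b ∈ I)
    {a b : M} (hab : a ∈ I ∨ b ∈ I) : m a b ∈ I := by
  classical
  rw [bilin_apply_eq_sum_decompose 𝒜]
  refine I.sum_mem fun q _ => h q.1 q.2 _ _ (SetLike.coe_mem _) (SetLike.coe_mem _) ?_
  exact hab.imp (hI a · q.1) (hI b · q.2)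

theorem mem_or_mem_of_homogeneous [Add ι] [UniqueSums ι] (m : M →ₗ[K] M →ₗ[K] M)
    (hI : ∀ x ∈ I, ∀ i, (decompose 𝒜 x i : M) ∈ I)
    (hm : ∀ i j a b, a ∈ 𝒜 i → b ∈ 𝒜 j → m a b ∈ 𝒜 (i + j))
    (h : ∀ i j a b, a ∈ 𝒜 i → b ∈ 𝒜 j → (m a b ∈ I ↔ a ∈ I ∨ b ∈ I))
    {a b : M} (hab : m a b ∈ I) : a ∈ I ∨ b ∈ I := by
  by_contra! hne
  obtain ⟨A, hA, haA⟩ := exists_finset_sub_sum_decompose_mem 𝒜 (I := I) a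
  obtain ⟨B, hB, hbB⟩ := exists_finset_sub_sum_decompose_mem 𝒜 (I := I) b
  have hAne : A.Nonempty := Finset.nonempty_iff_ne_empty.mpr fun hA =>
    hne.1 (by simpa [hA] using haA)
  have hBne : B.Nonempty := Finset.nonempty_iff_ne_empty.mpr fun hB =>
    hne.2 (by simpa [hB] using hbB)
  obtain ⟨i₀, hi₀, j₀, hj₀, huniq⟩ := UniqueSums.uniqueAdd_of_nonempty hAne hBne
  set a' := ∑ i ∈ A, (decompose 𝒜 a i : M)
  set b' := ∑ j ∈ B, (decompose 𝒜 b j : M)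
  have hmI : ∀ {x y : M}, x ∈ I ∨ y ∈ I → m x y ∈ I :=
    bilin_mem_of_homogeneous 𝒜 m hI fun i j x y hx hy => (h i j x y hx hy).mpr
  have hab' : m a' b' ∈ I := by
    have hdiff : m a b - m a' b' = m (a - a') b + m a' (b - b') := by
      simp only [map_sub, LinearMap.sub_apply]
      abel
    have hcross : m (a - a') b + m a' (b - b') ∈ I := I.add_mem (hmI (.inl haA)) (hmI (.inr hbB))
    rw [← hdiff] at hcross
    simpa only [sub_sub_cancel] using I.sub_mem hab hcross
  have hlead := hI _ hab' (i₀ + j₀)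
  rw [decompose_bilin_sum_of_uniqueAdd 𝒜 m hm (fun i => SetLike.coe_mem _)
    (fun j => SetLike.coe_mem _) hi₀ hj₀ huniq] at hlead
  exact ((h _ _ _ _ (SetLike.coe_mem _) (SetLike.coe_mem _)).mp hlead).elim (hA i₀ hi₀) (hB j₀ hj₀)

theorem completelyPrime_iff_homogeneous [Add ι] [UniqueSums ι] (m : M →ₗ[K] M →ₗ[K] M)
    (hI : ∀ x ∈ I, ∀ i, (decompose 𝒜 x i : M) ∈ I)
    (hm : ∀ i j a b, a ∈ 𝒜 i → b ∈ 𝒜 j → m a b ∈ 𝒜 (i + j)) :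
    ((∀ a ∈ I, ∀ r, m r a ∈ I ∧ m a r ∈ I) ∧ ∀ a b, m a b ∈ I → a ∈ I ∨ b ∈ I) ↔
      ∀ i j a b, a ∈ 𝒜 i → b ∈ 𝒜 j → (m a b ∈ I ↔ a ∈ I ∨ b ∈ I) := by
  refine ⟨fun ⟨hideal, hprime⟩ i j a b _ _ => ⟨hprime a b, ?_⟩, fun h => ⟨?_, ?_⟩⟩
  · rintro (ha | hb)
    exacts [(hideal a ha b).2, (hideal b hb a).1]
  · have hmI : ∀ {x y : M}, x ∈ I ∨ y ∈ I → m x y ∈ I :=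
      bilin_mem_of_homogeneous 𝒜 m hI fun i j x y hx hy => (h i j x y hx hy).mpr
    exact fun a ha r => ⟨hmI (.inr ha), hmI (.inl ha)⟩
  · exact fun a b => mem_or_mem_of_homogeneous 𝒜 m hI hm h

end DirectSum

theorem graded_completely_prime_iff_twist_general
    {K : Type*} [Field K] {C : Type*} [AddCommGroup C] [DecidableEq C]
    [Module.Free ℤ C]
    {R : Type*} [Ring R] [Algebra K R]
    (𝒜 : C → Submodule K R) [GradedAlgebra 𝒜]
    (p : C → C → Kˣ)
    -- the twisted multiplication of `R_p`
    (mp : R →ₗ[K] R →ₗ[K] R)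
    (hmp : ∀ (α β : C) (a b : R), a ∈ 𝒜 α → b ∈ 𝒜 β →
      mp a b = (p α β : K) • (a * b))
    -- a graded subspace `I`, i.e. `I = ⊕_{γ∈C} (I ∩ R_γ)`
    (I : Submodule K R)
    (hIgr : ∀ x ∈ I, ∀ γ : C, ((DirectSum.decompose 𝒜 x γ : 𝒜 γ) : R) ∈ I) :
    ((1 : R) ∉ I ∧ (∀ a ∈ I, ∀ r : R, mp r a ∈ I ∧ mp a r ∈ I) ∧
      (∀ a b : R, mp a b ∈ I → a ∈ I ∨ b ∈ I))
    ↔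
    ((1 : R) ∉ I ∧ (∀ a ∈ I, ∀ r : R, r * a ∈ I ∧ a * r ∈ I) ∧
      (∀ a b : R, a * b ∈ I → a ∈ I ∨ b ∈ I)) := by
  have : UniqueSums C :=
    (Module.Free.chooseBasis ℤ C).repr.toAddEquiv.uniqueSums_iff.mpr inferInstance
  have hmp_graded : ∀ α β a b, a ∈ 𝒜 α → b ∈ 𝒜 β → mp a b ∈ 𝒜 (α + β) := fun α β a b ha hb => by
    rw [hmp α β a b ha hb]
    exact Submodule.smul_mem _ _ (SetLike.mul_mem_graded ha hb)
  have hmul := DirectSum.completelyPrime_iff_homogeneous 𝒜 (LinearMap.mul K R) hIgr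
    fun _ _ _ _ ha hb => SetLike.mul_mem_graded ha hb
  simp only [LinearMap.mul_apply'] at hmul
  rw [DirectSum.completelyPrime_iff_homogeneous 𝒜 mp hIgr hmp_graded, hmul]
  refine and_congr_right fun _ => forall₄_congr fun α β a b =>
    imp_congr_right fun ha => imp_congr_right fun hb => ?_
  rw [hmp α β a b ha hb, ← Units.smul_def, Submodule.smul_mem_iff']

/-- For a `K`-algebra `R` graded by a free abelian group `C` of finite rank and a
normalized 2-cocycle `p`, a graded subspace `I` of `R` is a completely prime
two-sided ideal of the twist `R_p` if and only if it is a completely prime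
two-sided ideal of `R`. -/
theorem graded_completely_prime_iff_twist
    {K : Type*} [Field K] {C : Type*} [AddCommGroup C] [DecidableEq C]
    [Module.Free ℤ C] [Module.Finite ℤ C]
    {R : Type*} [Ring R] [Algebra K R]
    (𝒜 : C → Submodule K R) [GradedAlgebra 𝒜]
    (p : C → C → Kˣ)
    (hp : ∀ α β γ : C, p β γ * p α (β + γ) = p (α + β) γ * p α β)
    (hpn : p 0 0 = 1)
    -- the twisted multiplication of `R_p`
    (mp : R →ₗ[K] R →ₗ[K] R)
    (hmp : ∀ (α β : C) (a b : R), a ∈ 𝒜 α → b ∈ 𝒜 β →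
      mp a b = (p α β : K) • (a * b))
    -- a graded subspace `I`, i.e. `I = ⊕_{γ∈C} (I ∩ R_γ)`
    (I : Submodule K R)
    (hIgr : ∀ x ∈ I, ∀ γ : C, ((DirectSum.decompose 𝒜 x γ : 𝒜 γ) : R) ∈ I) :
    ((1 : R) ∉ I ∧ (∀ a ∈ I, ∀ r : R, mp r a ∈ I ∧ mp a r ∈ I) ∧
      (∀ a b : R, mp a b ∈ I → a ∈ I ∨ b ∈ I))
    ↔
    ((1 : R) ∉ I ∧ (∀ a ∈ I, ∀ r : R, r * a ∈ I ∧ a * r ∈ I) ∧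
      (∀ a b : R, a * b ∈ I → a ∈ I ∨ b ∈ I)) :=
  graded_completely_prime_iff_twist_general 𝒜 p mp hmp I hIgr
end

section
/- Let M be a free abelian group, let α_1,…,α_r ∈ M, and let f_1,…,f_r : M → ℤ be additive maps with f_i(α_i) = 2 for each i. Let s_i : M → M be the reflection s_i(v) = v − f_i(v)·α_i, an involutive group automorphism of M. Fix l ≥ 0, a word i_1,…,i_l with each i_j ∈ {1,…,r}, and a subset D ⊆ {1,…,l}. For 0 ≤ j ≤ l set w_{(j)} = s_{i_1}∘⋯∘s_{i_j} and w^D_{(j)} = s^D_{i_1}∘⋯∘s^D_{i_j}, where s^D_{i_k} = s_{i_k} if k ∈ D and s^D_{i_k} = id otherwise (and w_{(0)} = w^D_{(0)} = id). Then the subgroups of M generated by {w^D_{(j−1)}(α_{i_j}) : j ∈ {1,…,l} \ D} and by {w_{(j−1)}(α_{i_j}) : j ∈ {1,…,l} \ D} coincide. -/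
/-- The reflection `v ↦ v - f(v) • a` of a free abelian group associated to an
element `a` and an additive functional `f` with `f a = 2`. -/
def sRefl {M : Type*} [AddCommGroup M] (f : M →+ ℤ) (a : M) (v : M) : M :=
  v - f v • a

/-!
Write `S_n` and `T_n` for the generators `w^D_{(j)}(α_{i_{j+1}})` and `w_{(j)}(α_{i_{j+1}})` with
`j < n`, `j ∉ D`. By induction on `n`, every difference `w_{(n)}(v) - w^D_{(n)}(v)` lies in
`⟨S_n⟩`, and `⟨S_n⟩ = ⟨T_n⟩`. At a letter `j ∈ D` both words gain the same reflection and nothing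
changes. At `j ∉ D` only `w` gains the reflection `s`; then
`w_{(j)}(s v) - w^D_{(j)}(v) = (w_{(j)}(v) - w^D_{(j)}(v)) - f(v) • w_{(j)}(α)`, while the new
generators `w^D_{(j)}(α)` and `w_{(j)}(α)` differ by an element of `⟨S_j⟩`.
-/

section PrefixGens

variable {X : Type*} {l : ℕ} (D : Finset (Fin l)) (g : Fin l → X)

def prefixGens (n : ℕ) : Set X :=
  g '' {j | (j : ℕ) < n ∧ j ∉ D}

@[simp]
theorem prefixGens_zero : prefixGens D g 0 = ∅ := by
  simp [prefixGens]

theorem prefixGens_length : prefixGens D g l = {v | ∃ j, j ∉ D ∧ v = g j} := by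
  ext v
  simp [prefixGens, eq_comm]

theorem prefixGens_succ_of_mem {j : Fin l} (hj : j ∈ D) :
    prefixGens D g (j + 1) = prefixGens D g j := by
  refine congrArg (g '' ·) (Set.ext fun i => ?_)
  simp only [Set.mem_ofPred_eq, Nat.lt_succ_iff_lt_or_eq, ← Fin.ext_iff]
  grind

theorem prefixGens_succ_of_notMem {j : Fin l} (hj : j ∉ D) :
    prefixGens D g (j + 1) = insert (g j) (prefixGens D g j) := by
  rw [prefixGens, prefixGens, ← Set.image_insert_eq]
  refine congrArg (g '' ·) (Set.ext fun i => ?_)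
  simp only [Set.mem_ofPred_eq, Set.mem_insert_iff, Nat.lt_succ_iff_lt_or_eq, ← Fin.ext_iff]
  grind

end PrefixGens

section AddCommGroup

open AddSubgroup

variable {M : Type*} [AddCommGroup M]

def sReflHom (f : M →+ ℤ) (a : M) : M →+ M :=
  AddMonoidHom.id M - (zmultiplesHom M a).comp f

theorem coe_sReflHom (f : M →+ ℤ) (a : M) : ⇑(sReflHom f a) = sRefl f a :=
  rfl

theorem AddMonoidHom.map_sRefl (W : M →+ M) (f : M →+ ℤ) (a v : M) :
    W (sRefl f a v) = W v - f v • W a := by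
  rw [sRefl, map_sub, map_zsmul]

theorem exists_addMonoidHom_of_comp_succ {l : ℕ} {w : ℕ → M → M} {t : Fin l → M → M}
    (ht : ∀ j, ∃ T : M →+ M, ⇑T = t j) (h0 : w 0 = id)
    (hsucc : ∀ j : Fin l, w (j + 1) = w j ∘ t j) :
    ∀ n ≤ l, ∃ W : M →+ M, ⇑W = w n
  | 0, _ => ⟨AddMonoidHom.id M, h0.symm⟩
  | n + 1, hn => by
    obtain ⟨W, hW⟩ := exists_addMonoidHom_of_comp_succ ht h0 hsucc n (by omega)
    obtain ⟨T, hT⟩ := ht ⟨n, hn⟩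
    exact ⟨W.comp T, by rw [AddMonoidHom.coe_comp, hW, hT, ← hsucc ⟨n, hn⟩]⟩

theorem closure_insert_eq_of_sub_mem {S : Set M} {x y : M} (h : x - y ∈ closure S) :
    closure (insert x S) = closure (insert y S) := by
  have key : ∀ {x y : M}, x - y ∈ closure S → closure (insert x S) ≤ closure (insert y S) := by
    intro x y hxy
    rw [closure_le, Set.insert_subset_iff]
    refine ⟨?_, subset_closure.trans (closure_mono (Set.subset_insert y S))⟩
    rw [← sub_add_cancel x y]
    exact add_mem (closure_mono (Set.subset_insert y S) hxy)
      (subset_closure (Set.mem_insert y S))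
  exact le_antisymm (key h) (key (sub_mem_comm_iff.mp h))

theorem closure_insert_congr {S T : Set M} (h : closure S = closure T) (x : M) :
    closure (insert x S) = closure (insert x T) := by
  simp only [Set.insert_eq, AddSubgroup.closure_union, h]

theorem sub_sRefl_mem_closure_insert {S : Set M} (W : M →+ M) {W' : M → M}
    (h : ∀ v, W v - W' v ∈ closure S) (f : M →+ ℤ) (a v : M) :
    W (sRefl f a v) - W' v ∈ closure (insert (W' a) S) := by
  have hS : closure S ≤ closure (insert (W' a) S) := closure_mono (Set.subset_insert _ S)
  have hWa : W a ∈ closure (insert (W' a) S) := by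
    rw [← closure_insert_eq_of_sub_mem (h a)]
    exact subset_closure (Set.mem_insert _ S)
  rw [W.map_sRefl, sub_right_comm]
  exact sub_mem (hS (h v)) (zsmul_mem hWa _)

section Word

variable {l : ℕ} (a : Fin l → M) (φ : Fin l → M →+ ℤ) (D : Finset (Fin l)) {w wD : ℕ → M → M}

theorem sub_mem_closure_prefixGens (hw0 : w 0 = id) (hwD0 : wD 0 = id)
    (hw : ∀ j : Fin l, w (j + 1) = w j ∘ sRefl (φ j) (a j))
    (hwD : ∀ j : Fin l, wD (j + 1) = wD j ∘ (if j ∈ D then sRefl (φ j) (a j) else id)) :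
    ∀ n ≤ l, ∀ v, w n v - wD n v ∈ closure (prefixGens D (fun j => wD j (a j)) n)
  | 0, _ => by simp [hw0, hwD0]
  | n + 1, hn => by
    have ih := sub_mem_closure_prefixGens hw0 hwD0 hw hwD n (by omega)
    obtain ⟨j, rfl⟩ : ∃ j : Fin l, (j : ℕ) = n := ⟨⟨n, hn⟩, rfl⟩
    intro v
    by_cases hj : j ∈ D
    · rw [hw j, hwD j, if_pos hj, prefixGens_succ_of_mem D _ hj]
      exact ih _
    · obtain ⟨W, hW⟩ := exists_addMonoidHom_of_comp_succ
        (fun j => ⟨sReflHom (φ j) (a j), coe_sReflHom _ _⟩) hw0 hw j j.isLt.le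
      rw [hw j, hwD j, if_neg hj, prefixGens_succ_of_notMem D _ hj, Function.comp_apply,
        Function.comp_id, ← hW]
      exact sub_sRefl_mem_closure_insert W (hW ▸ ih) _ _ _

theorem closure_prefixGens_eq (hw0 : w 0 = id) (hwD0 : wD 0 = id)
    (hw : ∀ j : Fin l, w (j + 1) = w j ∘ sRefl (φ j) (a j))
    (hwD : ∀ j : Fin l, wD (j + 1) = wD j ∘ (if j ∈ D then sRefl (φ j) (a j) else id)) :
    ∀ n ≤ l, closure (prefixGens D (fun j => wD j (a j)) n) =
      closure (prefixGens D (fun j => w j (a j)) n)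
  | 0, _ => by simp
  | n + 1, hn => by
    have ih := closure_prefixGens_eq hw0 hwD0 hw hwD n (by omega)
    obtain ⟨j, rfl⟩ : ∃ j : Fin l, (j : ℕ) = n := ⟨⟨n, hn⟩, rfl⟩
    by_cases hj : j ∈ D
    · rwa [prefixGens_succ_of_mem D _ hj, prefixGens_succ_of_mem D _ hj]
    · have hdiff := sub_mem_closure_prefixGens a φ D hw0 hwD0 hw hwD j j.isLt.le (a j)
      rw [prefixGens_succ_of_notMem D _ hj, prefixGens_succ_of_notMem D _ hj,
        closure_insert_eq_of_sub_mem (sub_mem_comm_iff.mp hdiff), closure_insert_congr ih]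

end Word

end AddCommGroup

theorem cauchon_lattice_eq_inversion_lattice_general
    {M : Type*} [AddCommGroup M]
    (r l : ℕ) (α : Fin r → M) (f : Fin r → (M →+ ℤ))
    (idx : Fin l → Fin r) (D : Finset (Fin l))
    (w wD : ℕ → M → M)
    (hw0 : w 0 = id) (hwD0 : wD 0 = id)
    (hw : ∀ j : Fin l,
      w ((j : ℕ) + 1) = w (j : ℕ) ∘ sRefl (f (idx j)) (α (idx j)))
    (hwD : ∀ j : Fin l,
      wD ((j : ℕ) + 1) =
        wD (j : ℕ) ∘ (if j ∈ D then sRefl (f (idx j)) (α (idx j)) else id)) :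
    AddSubgroup.closure {v : M | ∃ j : Fin l, j ∉ D ∧ v = wD (j : ℕ) (α (idx j))}
      = AddSubgroup.closure
          {v : M | ∃ j : Fin l, j ∉ D ∧ v = w (j : ℕ) (α (idx j))} := by
  simpa only [prefixGens_length] using
    closure_prefixGens_eq (fun j => α (idx j)) (fun j => f (idx j)) D hw0 hwD0 hw hwD l le_rfl

/-- For a word `s_{i_1} ⋯ s_{i_l}` in the reflections and a subset
`D ⊆ {1,…,l}`, the subgroup generated by
`{w^D_{(j-1)}(α_{i_j}) : j ∉ D}` equals the subgroup generated by
`{w_{(j-1)}(α_{i_j}) : j ∉ D}`, where `w_{(j)} = s_{i_1} ∘ ⋯ ∘ s_{i_j}`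
and `w^D_{(j)}` is the corresponding subword composition. -/
theorem cauchon_lattice_eq_inversion_lattice
    {M : Type*} [AddCommGroup M] [Module.Free ℤ M]
    (r l : ℕ) (α : Fin r → M) (f : Fin r → (M →+ ℤ))
    (hf : ∀ i : Fin r, f i (α i) = 2)
    (idx : Fin l → Fin r) (D : Finset (Fin l))
    (w wD : ℕ → M → M)
    (hw0 : w 0 = id) (hwD0 : wD 0 = id)
    (hw : ∀ j : Fin l,
      w ((j : ℕ) + 1) = w (j : ℕ) ∘ sRefl (f (idx j)) (α (idx j)))
    (hwD : ∀ j : Fin l,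
      wD ((j : ℕ) + 1) =
        wD (j : ℕ) ∘ (if j ∈ D then sRefl (f (idx j)) (α (idx j)) else id)) :
    AddSubgroup.closure {v : M | ∃ j : Fin l, j ∉ D ∧ v = wD (j : ℕ) (α (idx j))}
      = AddSubgroup.closure
          {v : M | ∃ j : Fin l, j ∉ D ∧ v = w (j : ℕ) (α (idx j))} :=
  cauchon_lattice_eq_inversion_lattice_general r l α f idx D w wD hw0 hwD0 hw hwD
end

section
/- Let K be a field, A an associative unital K-algebra, σ a K-algebra automorphism of A, and ∂ : A → A a K-linear right skew σ-derivation, i.e. ∂(ab) = ∂(a)σ(b) + a∂(b) for all a, b ∈ A. Assume ∂ is locally nilpotent and that σ∂σ⁻¹ = q'·∂ for some q' ∈ Kˣ which is not a root of unity. Then ∂ is right regular: for all σ-eigenvectors a, b ∈ A of ∂-degrees m and n respectively, and every integer k with n ≤ k ≤ m + n, there exist scalars s_0, s_1, …, s_{m+n−k} ∈ K with s_0 ≠ 0 such that ∂^k(ab) = Σ_{i=0}^{m+n−k} s_i·(∂^{k−n+i}(a))·(∂^{n−i}(b)). -/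
/-!
Since `σ δ = q' δ σ`, the iterates `δ^j b` of a `σ`-eigenvector `b` are again eigenvectors, with
eigenvalues `q'^j t_b`. Iterating the skew Leibniz rule therefore gives the q-Leibniz formula
`δ^N (a b) = Σ_{i + j = N} t_b^i [i + j choose i]_{q'} (δ^i a)(δ^j b)`. Only the terms with
`i ≤ m` and `j ≤ n` survive, which is the required window, and its leading coefficient is nonzero
because `[i + j choose i]_q (q;q)_i (q;q)_j = (q;q)_{i+j}`, a product of factors `1 - q^l` that do
not vanish when `q` is not a root of unity.
-/

open Finset

/-- The Gaussian binomial coefficient `[i + j choose i]_q`, indexed by the two parts `i, j`. -/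
def qBinom {R : Type*} [Semiring R] (q : R) : ℕ → ℕ → R
  | 0, _ => 1
  | _ + 1, 0 => 1
  | i + 1, j + 1 => q ^ (j + 1) * qBinom q i (j + 1) + qBinom q (i + 1) j

theorem qBinom_zero_right {R : Type*} [Semiring R] (q : R) : ∀ i, qBinom q i 0 = 1
  | 0 | _ + 1 => by rw [qBinom]

def qPochhammer {R : Type*} [CommRing R] (q : R) (n : ℕ) : R :=
  ∏ i ∈ range n, (1 - q ^ (i + 1))

section qBinom

variable {R : Type*} [CommRing R] (q : R)

theorem qPochhammer_succ (n : ℕ) :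
    qPochhammer q (n + 1) = qPochhammer q n * (1 - q ^ (n + 1)) :=
  prod_range_succ _ _

theorem qBinom_mul_qPochhammer :
    ∀ i j : ℕ, qBinom q i j * (qPochhammer q i * qPochhammer q j) = qPochhammer q (i + j)
  | 0, j => by simp [qBinom, qPochhammer]
  | i + 1, 0 => by simp [qBinom, qPochhammer]
  | i + 1, j + 1 => by
    have h₁ := qBinom_mul_qPochhammer i (j + 1)
    have h₂ := qBinom_mul_qPochhammer (i + 1) j
    rw [show i + (j + 1) = i + j + 1 by omega] at h₁
    rw [show i + 1 + j = i + j + 1 by omega] at h₂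
    rw [show i + 1 + (j + 1) = i + j + 1 + 1 by omega, qBinom]
    simp only [qPochhammer_succ] at *
    linear_combination q ^ (j + 1) * (1 - q ^ (i + 1)) * h₁ + (1 - q ^ (j + 1)) * h₂

variable {q} [IsDomain R]

theorem qPochhammer_ne_zero (hq : ∀ n, q ^ n = 1 → n = 0) (n : ℕ) : qPochhammer q n ≠ 0 :=
  prod_ne_zero_iff.mpr fun i _ h => i.succ_ne_zero (hq _ (sub_eq_zero.mp h).symm)

theorem qBinom_ne_zero (hq : ∀ n, q ^ n = 1 → n = 0) (i j : ℕ) : qBinom q i j ≠ 0 :=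
  left_ne_zero_of_mul <| (qBinom_mul_qPochhammer q i j).symm ▸ qPochhammer_ne_zero hq _

end qBinom

theorem sum_antidiagonal_succ_of_pascal {M : Type*} [AddCommMonoid M] {f g h : ℕ × ℕ → M}
    (hf₀ : ∀ j, f (0, j + 1) = h (0, j)) (hf₁ : ∀ i, f (i + 1, 0) = g (i, 0))
    (hf : ∀ i j, f (i + 1, j + 1) = g (i, j + 1) + h (i + 1, j)) :
    ∀ N, ∑ p ∈ antidiagonal (N + 1), f p = ∑ p ∈ antidiagonal N, (g p + h p)
  | 0 => by simp [Nat.sum_antidiagonal_succ, hf₀, hf₁, add_comm]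
  | N + 1 => by
    rw [Nat.sum_antidiagonal_succ, Nat.sum_antidiagonal_succ', sum_add_distrib,
      Nat.sum_antidiagonal_succ', Nat.sum_antidiagonal_succ (f := h)]
    simp only [hf₀, hf₁, hf, sum_add_distrib]
    abel

section SkewDerivation

variable {K A : Type*} [CommSemiring K] [Semiring A] [Algebra K A] {δ : Module.End K A} {q t : K}

theorem map_pow_apply_eq_smul {F : Type*} [FunLike F A A] [MulActionHomClass F K A A] {σ : F}
    (hcomm : ∀ x, σ (δ x) = q • δ (σ x)) {b : A} (hb : σ b = t • b) :
    ∀ n, σ ((δ ^ n) b) = (q ^ n * t) • (δ ^ n) b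
  | 0 => by simpa using hb
  | n + 1 => by
    rw [pow_succ' δ, Module.End.mul_apply, hcomm, map_pow_apply_eq_smul hcomm hb n, map_smul,
      smul_smul, pow_succ]
    ring_nf

theorem pow_apply_mul_eq_sum_qBinom {σ : A → A} (hskew : ∀ a b, δ (a * b) = δ a * σ b + a * δ b)
    {b : A} (hb : ∀ n, σ ((δ ^ n) b) = (q ^ n * t) • (δ ^ n) b) (a : A) (N : ℕ) :
    (δ ^ N) (a * b) =
      ∑ p ∈ antidiagonal N, (t ^ p.1 * qBinom q p.1 p.2) • ((δ ^ p.1) a * (δ ^ p.2) b) := by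
  induction N with
  | zero => simp [qBinom]
  | succ N ih =>
    rw [sum_antidiagonal_succ_of_pascal
      (g := fun p =>
        (t ^ (p.1 + 1) * q ^ p.2 * qBinom q p.1 p.2) • ((δ ^ (p.1 + 1)) a * (δ ^ p.2) b))
      (h := fun p => (t ^ p.1 * qBinom q p.1 p.2) • ((δ ^ p.1) a * (δ ^ (p.2 + 1)) b))]
    · rw [pow_succ' δ, Module.End.mul_apply, ih, map_sum]
      refine sum_congr rfl fun p _ => ?_
      rw [map_smul, hskew, hb, pow_succ' δ, pow_succ' δ, Module.End.mul_apply,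
        Module.End.mul_apply, mul_smul_comm, smul_add, smul_smul]
      ring_nf
    · simp [qBinom]
    · simp [qBinom_zero_right]
    · intro i j
      rw [qBinom, ← add_smul]
      ring_nf

end SkewDerivation

theorem sum_antidiagonal_eq_sum_range_of_support {M : Type*} [AddCommMonoid M] {f : ℕ × ℕ → M}
    {m n k : ℕ} (hf : ∀ i j, m < i ∨ n < j → f (i, j) = 0) (hnk : n ≤ k) :
    ∑ p ∈ antidiagonal k, f p =
      ∑ i ∈ range (m + n - k + 1), if i ≤ n then f (k - n + i, n - i) else 0 := by
  symm
  refine sum_bij_ne_zero (fun i _ _ => (k - n + i, n - i)) ?_ ?_ ?_ ?_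
  · intro i _ hne
    have : i ≤ n := by by_contra h; simp [h] at hne
    rw [HasAntidiagonal.mem_antidiagonal]
    omega
  · intro i₁ _ _ i₂ _ _ h
    simp only [Prod.mk.injEq] at h
    omega
  · rintro ⟨i, j⟩ hp hne
    rw [HasAntidiagonal.mem_antidiagonal] at hp
    have hi : i ≤ m := by by_contra h; exact hne (hf i j (by omega))
    have hj : j ≤ n := by by_contra h; exact hne (hf i j (by omega))
    refine ⟨n - j, by rw [mem_range]; omega, ?_, ?_⟩ <;>
      rw [show k - n + (n - j) = i by omega, Nat.sub_sub_self hj]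
    rwa [if_pos (Nat.sub_le n j)]
  · intro i _ hne
    have : i ≤ n := by by_contra h; simp [h] at hne
    rw [if_pos this]

theorem skew_derivation_right_regular_general
    {K : Type*} [Field K] {A : Type*} [Ring A] [Algebra K A]
    (σ : A ≃ₐ[K] A) (δ : Module.End K A)
    (hskew : ∀ a b : A, δ (a * b) = δ a * σ b + a * δ b)
    (q' : Kˣ) (hq' : ∀ n : ℕ, q' ^ n = 1 → n = 0)
    (hconj : ∀ a : A, σ (δ (σ.symm a)) = (q' : K) • δ a) :
    ∀ (a b : A) (ta tb : K) (m n : ℕ),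
      a ≠ 0 → σ a = ta • a → (δ ^ (m + 1)) a = 0 → (δ ^ m) a ≠ 0 →
      b ≠ 0 → σ b = tb • b → (δ ^ (n + 1)) b = 0 → (δ ^ n) b ≠ 0 →
      ∀ k : ℕ, n ≤ k → k ≤ m + n →
        ∃ s : ℕ → K, s 0 ≠ 0 ∧
          (δ ^ k) (a * b) =
            ∑ i ∈ Finset.range (m + n - k + 1),
              s i • ((δ ^ (k - n + i)) a * (δ ^ (n - i)) b) := by
  intro a b ta tb m n _ _ ham _ hb0 hbσ hbn _ k hnk _
  have htb : tb ≠ 0 := by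
    rintro rfl
    exact hb0 (σ.injective (by rw [hbσ, zero_smul, map_zero]))
  have hq : ∀ n : ℕ, (q' : K) ^ n = 1 → n = 0 := fun n h => hq' n (Units.ext (by simpa using h))
  have hcomm : ∀ x, σ (δ x) = (q' : K) • δ (σ x) := fun x => by simpa using hconj (σ x)
  refine ⟨fun i => if i ≤ n then tb ^ (k - n + i) * qBinom (q' : K) (k - n + i) (n - i) else 0,
    by simpa using mul_ne_zero (pow_ne_zero _ htb) (qBinom_ne_zero hq _ _), ?_⟩
  rw [pow_apply_mul_eq_sum_qBinom hskew (map_pow_apply_eq_smul hcomm hbσ),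
    sum_antidiagonal_eq_sum_range_of_support (m := m) ?_ hnk]
  · refine sum_congr rfl fun i _ => ?_
    by_cases hi : i ≤ n <;> simp [hi]
  · rintro i j (hi | hj)
    · rw [Module.End.pow_map_zero_of_le hi ham, zero_mul, smul_zero]
    · rw [Module.End.pow_map_zero_of_le hj hbn, mul_zero, smul_zero]

/-- A locally nilpotent right skew `σ`-derivation `δ` with `σ δ σ⁻¹ = q' δ`, where
`q' ∈ Kˣ` is not a root of unity, is right regular: for `σ`-eigenvectors `a, b`
of `δ`-degrees `m, n` and `n ≤ k ≤ m + n`, one has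
`δ^k(ab) = Σ_{i=0}^{m+n-k} s_i (δ^{k-n+i} a)(δ^{n-i} b)` with `s_0 ≠ 0`. -/
theorem skew_derivation_right_regular
    {K : Type*} [Field K] {A : Type*} [Ring A] [Algebra K A]
    (σ : A ≃ₐ[K] A) (δ : Module.End K A)
    (hskew : ∀ a b : A, δ (a * b) = δ a * σ b + a * δ b)
    (hln : ∀ a : A, ∃ n : ℕ, (δ ^ n) a = 0)
    (q' : Kˣ) (hq' : ∀ n : ℕ, q' ^ n = 1 → n = 0)
    (hconj : ∀ a : A, σ (δ (σ.symm a)) = (q' : K) • δ a) :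
    ∀ (a b : A) (ta tb : K) (m n : ℕ),
      a ≠ 0 → σ a = ta • a → (δ ^ (m + 1)) a = 0 → (δ ^ m) a ≠ 0 →
      b ≠ 0 → σ b = tb • b → (δ ^ (n + 1)) b = 0 → (δ ^ n) b ≠ 0 →
      ∀ k : ℕ, n ≤ k → k ≤ m + n →
        ∃ s : ℕ → K, s 0 ≠ 0 ∧
          (δ ^ k) (a * b) =
            ∑ i ∈ Finset.range (m + n - k + 1),
              s i • ((δ ^ (k - n + i)) a * (δ ^ (n - i)) b) :=
  skew_derivation_right_regular_general σ δ hskew q' hq' hconj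
end

section
/- Let V be a finite-dimensional vector space over ℚ equipped with a nondegenerate symmetric bilinear form ⟨·,·⟩, let P ⊆ V be a finitely generated subgroup whose ℚ-span is all of V, and let L ⊆ P be a subgroup. Then there exists a positive integer n such that every group homomorphism φ : L → ℤ has the form φ(γ) = ⟨λ, γ⟩ for all γ ∈ L, for some λ ∈ V with n·λ ∈ P. -/
/-!
`L` is a finitely generated torsion-free `ℤ`-module, hence has a finite basis `(b i)`, which
remains linearly independent over `ℚ`. Nondegeneracy identifies `V` with its dual, so there are
`λ i ∈ V` with `⟨λ i, b j⟩ = δᵢⱼ`, and `φ` is represented by `∑ i, φ (b i) • λ i`. Each `λ i` lies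
in the `ℚ`-span of `P`, so some positive multiple of it lies in `P`; the product of these
multipliers is a uniform `n`.
-/

section

variable {V : Type*} [AddCommGroup V] [Module ℚ V]

theorem Submodule.exists_pos_zsmul_mem_of_mem_span (P : Submodule ℤ V) {v : V}
    (hv : v ∈ span ℚ (P : Set V)) : ∃ m : ℕ, 0 < m ∧ (m : ℤ) • v ∈ P := by
  induction hv using Submodule.span_induction with
  | mem x hx => exact ⟨1, one_pos, by simpa using hx⟩
  | zero => exact ⟨1, one_pos, by simp⟩
  | add x y _ _ hx hy =>
    obtain ⟨m₁, hm₁, hx⟩ := hx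
    obtain ⟨m₂, hm₂, hy⟩ := hy
    refine ⟨m₁ * m₂, by positivity, ?_⟩
    rw [Nat.cast_mul, mul_smul, smul_add, smul_add, smul_comm (m₁ : ℤ) (m₂ : ℤ) x]
    exact P.add_mem (P.smul_mem _ hx) (P.smul_mem _ hy)
  | smul q x _ hx =>
    obtain ⟨m, hm, hx⟩ := hx
    refine ⟨q.den * m, by positivity, ?_⟩
    have : ((q.den * m : ℕ) : ℤ) • q • x = q.num • (m : ℤ) • x := by
      simp only [← Int.cast_smul_eq_zsmul ℚ, smul_smul]
      congr 1
      push_cast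
      rw [← Rat.mul_den_eq_num]
      ring
    rw [this]
    exact P.smul_mem _ hx

theorem Submodule.exists_pos_zsmul_mem_of_span_eq_top (P : Submodule ℤ V)
    (hP : span ℚ (P : Set V) = ⊤) {ι : Type*} [Fintype ι] (v : ι → V) :
    ∃ n : ℕ, 0 < n ∧ ∀ i, (n : ℤ) • v i ∈ P := by
  choose m hm hmP using fun i => P.exists_pos_zsmul_mem_of_mem_span (hP ▸ mem_top (x := v i))
  refine ⟨∏ i, m i, Finset.prod_pos fun i _ => hm i, fun i => ?_⟩
  obtain ⟨k, hk⟩ := Finset.dvd_prod_of_mem m (Finset.mem_univ i)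
  rw [hk, Nat.cast_mul, mul_comm, mul_smul]
  exact P.smul_mem _ (hmP i)

end

theorem LinearMap.BilinForm.exists_apply_eq_of_linearIndependent {K V : Type*} [Field K]
    [AddCommGroup V] [Module K V] [FiniteDimensional K V] {B : LinearMap.BilinForm K V}
    (hB : B.SeparatingLeft) {ι : Type*} {v : ι → V} (hv : LinearIndependent K v) (c : ι → K) :
    ∃ lam : V, ∀ i, B lam (v i) = c i := by
  obtain ⟨f, hf⟩ := LinearMap.dualMap_surjective_of_injective hv (Finsupp.linearCombination K c)
  refine ⟨(B.toDual (.ofSeparatingLeft hB)).symm f, fun i => ?_⟩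
  rw [apply_toDual_symm_apply]
  simpa using LinearMap.congr_fun hf (Finsupp.single i 1)

theorem hom_of_sublattice_represented_by_form_general
    {V : Type*} [AddCommGroup V] [Module ℚ V] [FiniteDimensional ℚ V]
    (B : V →ₗ[ℚ] V →ₗ[ℚ] ℚ)
    (hnd : ∀ u : V, (∀ v : V, B u v = 0) → u = 0)
    (P L : Submodule ℤ V) (hP : P.FG)
    (hfull : Submodule.span ℚ (P : Set V) = ⊤)
    (hLP : L ≤ P) :
    ∃ n : ℕ, 0 < n ∧ ∀ φ : L →+ ℤ, ∃ lam : V,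
      (n : ℤ) • lam ∈ P ∧ ∀ γ : L, (φ γ : ℚ) = B lam (γ : V) := by
  have : Module.IsTorsionFree ℤ V := .trans_faithfulSMul ℤ ℚ V
  have : Module.Finite ℤ L := Module.Finite.iff_fg.mpr (hP.of_le hLP)
  let b := Module.Free.chooseBasis ℤ L
  have hb : LinearIndependent ℚ (fun i => (b i : V)) :=
    (LinearIndependent.iff_fractionRing ℤ ℚ).mp (b.linearIndependent.map' L.subtype L.ker_subtype)
  choose lam hlam using fun i =>
    LinearMap.BilinForm.exists_apply_eq_of_linearIndependent hnd hb (Pi.single i 1)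
  obtain ⟨n, hn, hnP⟩ := P.exists_pos_zsmul_mem_of_span_eq_top hfull lam
  refine ⟨n, hn, fun φ => ⟨∑ i, φ (b i) • lam i, ?_, fun γ => ?_⟩⟩
  · rw [Finset.smul_sum]
    exact P.sum_mem fun i _ => smul_comm (n : ℤ) (φ (b i)) (lam i) ▸ P.smul_mem _ (hnP i)
  · have hrep : ((Int.castAddHom ℚ).comp φ).toIntLinearMap =
        ((B (∑ i, φ (b i) • lam i)).restrictScalars ℤ).comp L.subtype :=
      b.ext fun j => by simp [hlam, Pi.single_apply]
    exact LinearMap.congr_fun hrep γ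

/-- Let `V` be a finite-dimensional `ℚ`-vector space with a nondegenerate symmetric
bilinear form, `P` a full-rank lattice in `V` and `L ⊆ P` a subgroup. Then there
is a positive integer `n` such that every homomorphism `φ : L → ℤ` is of the form
`φ(γ) = ⟨λ, γ⟩` for some `λ ∈ (1/n)P`. -/
theorem hom_of_sublattice_represented_by_form
    {V : Type*} [AddCommGroup V] [Module ℚ V] [FiniteDimensional ℚ V]
    (B : V →ₗ[ℚ] V →ₗ[ℚ] ℚ)
    (hsymm : ∀ u v : V, B u v = B v u)
    (hnd : ∀ u : V, (∀ v : V, B u v = 0) → u = 0)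
    (P L : Submodule ℤ V) (hP : P.FG)
    (hfull : Submodule.span ℚ (P : Set V) = ⊤)
    (hLP : L ≤ P) :
    ∃ n : ℕ, 0 < n ∧ ∀ φ : L →+ ℤ, ∃ lam : V,
      (n : ℤ) • lam ∈ P ∧ ∀ γ : L, (φ γ : ℚ) = B lam (γ : V) :=
  hom_of_sublattice_represented_by_form_general B hnd P L hP hfull hLP
end
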